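/- Fix β ∈ (1,2), a threshold sequence u = (u_n)_{n≥1} with each u_n ∈ [1,(β−1)⁻¹], and ε ∈ (0,1). For each integer m ≥ 1 set k̄(m) = ⌈(1+ε)·m·log 2/log β⌉. Then for Lebesgue-almost every x ∈ [0,1] there exists M ∈ ℕ such that for all m ≥ M one has I_{k̄(m)}(u,x) ⊆ D_m(x); in particular k(m,u,x) ≤ k̄(m) for all m ≥ M. -/

import Mathlib

/-!
Because the iterates `x_k` stay in `[0, (β-1)⁻¹]`, the interval `I_k(u,x)` contains `x` and has
length `(β-1)⁻¹ β^{-k}`. For `k = k̄(m)` we have `β^k ≥ (2 · 2^ε)^m`, so `I_k(u,x)` lies within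
`r_m = (β-1)⁻¹ (2 · 2^ε)^{-m}` of `x`, and it can leave `D_m(x)` only if `x` is `r_m`-close to one
of the `2^m + 1` dyadic points `j / 2^m`. That happens on a set of measure `O(2^{-εm})`, which is
summable in `m`, so by Borel–Cantelli almost every `x` is close to the grid for finitely many `m`
only.
-/

open MeasureTheory Filter Set Real

/-- Orbit of the β-encoder: `betaIter β u x n` is the iterate `x_n`, where
`x_0 = x` and `x_n = T_{u_n}(x_{n-1})`. -/
noncomputable def betaIter (β : ℝ) (u : ℕ → ℝ) (x : ℝ) : ℕ → ℝ
  | 0 => x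
  | n + 1 =>
      if β * betaIter β u x n < u (n + 1) then β * betaIter β u x n
      else β * betaIter β u x n - 1

/-- The bit `b_n` produced by the β-encoder at step `n ≥ 1`. -/
noncomputable def betaBit (β : ℝ) (u : ℕ → ℝ) (x : ℝ) (n : ℕ) : ℝ :=
  if β * betaIter β u x (n - 1) < u n then 0 else 1

/-- The interval `I_k(u,x)` determined by the first `k` output bits. -/
noncomputable def betaI (β : ℝ) (u : ℕ → ℝ) (x : ℝ) (k : ℕ) : Set ℝ :=
  Set.Icc (∑ n ∈ Finset.Icc 1 k, betaBit β u x n / β ^ n)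
    ((∑ n ∈ Finset.Icc 1 k, betaBit β u x n / β ^ n) + (β ^ k)⁻¹ * (β - 1)⁻¹)

/-- The dyadic interval of order `m` containing `x`: `[j/2^m, (j+1)/2^m)`,
the last one (containing 1) being `[1 - 2^{-m}, 1]`. -/
noncomputable def dyadic (m : ℕ) (x : ℝ) : Set ℝ :=
  if 1 - ((2:ℝ) ^ m)⁻¹ ≤ x then Set.Icc (1 - ((2:ℝ) ^ m)⁻¹) 1
  else Set.Ico ((⌊x * 2 ^ m⌋ : ℝ) / 2 ^ m) (((⌊x * 2 ^ m⌋ : ℝ) + 1) / 2 ^ m)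

/-- `k(m, u, x) = inf { k ≥ 1 : I_k(u,x) ⊆ D_m(x) } ∈ ℕ ∪ {∞}`. -/
noncomputable def kval (β : ℝ) (u : ℕ → ℝ) (x : ℝ) (m : ℕ) : ℕ∞ :=
  sInf {e : ℕ∞ | ∃ k : ℕ, e = (k : ℕ∞) ∧ 1 ≤ k ∧ betaI β u x k ⊆ dyadic m x}

lemma betaIter_mem_Icc {β : ℝ} (hβ : 1 < β) {u : ℕ → ℝ}
    (hu : ∀ n, 1 ≤ n → u n ∈ Icc (1 : ℝ) (β - 1)⁻¹) {x : ℝ} (hx : x ∈ Icc (0 : ℝ) (β - 1)⁻¹)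
    (n : ℕ) : betaIter β u x n ∈ Icc (0 : ℝ) (β - 1)⁻¹ := by
  induction n with
  | zero => exact hx
  | succ n ih =>
    obtain ⟨hy0, hyc⟩ := ih
    obtain ⟨hu1, huc⟩ := hu (n + 1) (Nat.le_add_left 1 n)
    have hfix : β * (β - 1)⁻¹ - 1 = (β - 1)⁻¹ := by
      field_simp [(sub_pos.2 hβ).ne']
      ring
    have hβy : β * betaIter β u x n ≤ β * (β - 1)⁻¹ := by gcongr
    rw [betaIter]
    split_ifs with h
    · exact ⟨by positivity, by linarith⟩
    · exact ⟨by linarith, by linarith⟩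

lemma sum_betaBit_div_pow {β : ℝ} (hβ : β ≠ 0) (u : ℕ → ℝ) (x : ℝ) (k : ℕ) :
    ∑ n ∈ Finset.Icc 1 k, betaBit β u x n / β ^ n = x - betaIter β u x k / β ^ k := by
  induction k with
  | zero => simp [betaIter]
  | succ k ih =>
    have hstep : betaIter β u x (k + 1) = β * betaIter β u x k - betaBit β u x (k + 1) := by
      simp only [betaIter, betaBit, Nat.add_sub_cancel]
      split_ifs <;> ring
    rw [Finset.sum_Icc_succ_top (Nat.le_add_left 1 k), ih, hstep]
    field_simp
    ring

lemma betaI_subset_Icc {β : ℝ} (hβ : 1 < β) {u : ℕ → ℝ}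
    (hu : ∀ n, 1 ≤ n → u n ∈ Icc (1 : ℝ) (β - 1)⁻¹) {x : ℝ} (hx : x ∈ Icc (0 : ℝ) (β - 1)⁻¹)
    (k : ℕ) : betaI β u x k ⊆ Icc (x - (β - 1)⁻¹ / β ^ k) (x + (β - 1)⁻¹ / β ^ k) := by
  obtain ⟨hy0, hyc⟩ := betaIter_mem_Icc hβ hu hx k
  have hβk : 0 < β ^ k := by positivity
  have hy : betaIter β u x k / β ^ k ≤ (β - 1)⁻¹ / β ^ k := by gcongr
  have hy0' : 0 ≤ betaIter β u x k / β ^ k := by positivity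
  rw [betaI, sum_betaBit_div_pow (by positivity), inv_mul_eq_div]
  exact Icc_subset_Icc (by linarith) (by linarith)

def nearDyadicGrid (m : ℕ) (r : ℝ) : Set ℝ :=
  ⋃ j ∈ Finset.range (2 ^ m + 1), Icc ((j : ℝ) / 2 ^ m - r) ((j : ℝ) / 2 ^ m + r)

lemma volume_nearDyadicGrid_le (m : ℕ) {r : ℝ} (hr : 0 ≤ r) :
    volume (nearDyadicGrid m r) ≤ ENNReal.ofReal (4 * 2 ^ m * r) := by
  calc volume (nearDyadicGrid m r)
      ≤ ∑ j ∈ Finset.range (2 ^ m + 1), volume (Icc ((j : ℝ) / 2 ^ m - r) ((j : ℝ) / 2 ^ m + r)) :=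
        measure_biUnion_finset_le _ _
    _ = ((2 ^ m + 1 : ℕ) : ENNReal) * ENNReal.ofReal (2 * r) := by
        simp only [Real.volume_Icc, add_sub_sub_cancel, ← two_mul, Finset.sum_const,
          Finset.card_range, nsmul_eq_mul]
    _ ≤ ENNReal.ofReal (4 * 2 ^ m * r) := by
        rw [← ENNReal.ofReal_natCast, ← ENNReal.ofReal_mul (by positivity)]
        refine ENNReal.ofReal_le_ofReal ?_
        push_cast
        nlinarith [one_le_pow₀ (M₀ := ℝ) (n := m) one_le_two]

lemma ae_eventually_notMem_nearDyadicGrid {r : ℕ → ℝ} (hr : ∀ m, 0 ≤ r m)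
    (hs : Summable fun m ↦ 2 ^ m * r m) :
    ∀ᵐ x, ∀ᶠ m in atTop, x ∉ nearDyadicGrid m (r m) := by
  refine ae_eventually_notMem (ne_top_of_le_ne_top ?_ (ENNReal.tsum_le_tsum fun m ↦
    volume_nearDyadicGrid_le m (hr m)))
  rw [← ENNReal.ofReal_tsum_of_nonneg (fun m ↦ by have := hr m; positivity)]
  · exact ENNReal.ofReal_ne_top
  · simpa only [mul_assoc] using hs.mul_left 4

lemma Icc_subset_dyadic {m : ℕ} {x r : ℝ} (hx : x ∈ Icc (0 : ℝ) 1) (hr : 0 ≤ r)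
    (hgrid : x ∉ nearDyadicGrid m r) : Icc (x - r) (x + r) ⊆ dyadic m x := by
  obtain ⟨hx0, hx1⟩ := hx
  have hT : (0 : ℝ) < 2 ^ m := by positivity
  have hfar : ∀ j : ℕ, j ≤ 2 ^ m → x < j / 2 ^ m - r ∨ j / 2 ^ m + r < x := by
    intro j hj
    by_contra! h
    exact hgrid (mem_biUnion (Finset.mem_range.2 (by omega)) h)
  set j := ⌊x * 2 ^ m⌋₊
  have hj : (⌊x * 2 ^ m⌋ : ℝ) = j := (natCast_floor_eq_intCast_floor (by positivity)).symm
  have hjx : (j : ℝ) / 2 ^ m ≤ x := by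
    rw [div_le_iff₀ hT]; exact Nat.floor_le (by positivity)
  have hxj : x < (j + 1) / 2 ^ m := by
    rw [lt_div_iff₀ hT]; exact Nat.lt_floor_add_one _
  have hxr : x + r < 1 := by
    have := hfar (2 ^ m) le_rfl
    rw [Nat.cast_pow, Nat.cast_ofNat, div_self hT.ne'] at this
    rcases this with h | h <;> linarith
  have hjT : j < 2 ^ m := by
    refine (Nat.floor_lt (by positivity)).2 ?_
    push_cast
    nlinarith
  have hleft : j / 2 ^ m + r < x := (hfar j hjT.le).resolve_left (by linarith)
  have hright : x + r < (j + 1) / 2 ^ m := by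
    have := hfar (j + 1) hjT
    push_cast at this
    rcases this with h | h <;> linarith
  unfold dyadic
  rw [hj]
  split_ifs with hlast
  · have hjlast : 2 ^ m ≤ j + 1 := by
      have h := hlast.trans_lt hxj
      rw [lt_div_iff₀ hT, sub_mul, inv_mul_cancel₀ hT.ne', one_mul] at h
      have : 2 ^ m < j + 2 := by exact_mod_cast (by linarith : (2 ^ m : ℝ) < j + 2)
      omega
    have hlow : 1 - ((2 : ℝ) ^ m)⁻¹ ≤ j / 2 ^ m := by
      have : (2 ^ m : ℝ) ≤ j + 1 := by exact_mod_cast hjlast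
      rw [le_div_iff₀ hT, sub_mul, inv_mul_cancel₀ hT.ne', one_mul]
      linarith
    exact Icc_subset_Icc (by linarith) hxr.le
  · exact fun y hy ↦ ⟨by linarith [hy.1], by linarith [hy.2]⟩

lemma two_mul_rpow_pow_le_pow_ceil {β : ℝ} (hβ : 1 < β) (ε : ℝ) (m : ℕ) :
    (2 * 2 ^ ε) ^ m ≤ β ^ ⌈(1 + ε) * (m : ℝ) * Real.log 2 / Real.log β⌉₊ := by
  have hlogβ : 0 < Real.log β := Real.log_pos hβ
  have hceil := Nat.le_ceil ((1 + ε) * (m : ℝ) * Real.log 2 / Real.log β)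
  rw [div_le_iff₀ hlogβ] at hceil
  rw [← Real.exp_log (by positivity : (0 : ℝ) < (2 * 2 ^ ε) ^ m),
    ← Real.exp_log (by positivity : (0 : ℝ) < β ^ _), Real.exp_le_exp, Real.log_pow,
    Real.log_pow, Real.log_mul two_ne_zero (by positivity), Real.log_rpow two_pos]
  linarith

lemma summable_two_pow_mul_div_two_mul_pow {a : ℝ} (ha : 1 < a) (c : ℝ) :
    Summable fun m : ℕ ↦ 2 ^ m * (c / (2 * a) ^ m) := by
  refine ((summable_geometric_of_lt_one (by positivity) (inv_lt_one_of_one_lt₀ ha)).mul_left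
    c).congr fun m ↦ ?_
  have : a ^ m ≠ 0 := by positivity
  rw [inv_pow, mul_pow]
  field_simp

lemma kval_le {β : ℝ} {u : ℕ → ℝ} {x : ℝ} {m k : ℕ} (hk : 1 ≤ k)
    (hsub : betaI β u x k ⊆ dyadic m x) : kval β u x m ≤ k :=
  sInf_le ⟨k, rfl, hk, hsub⟩

/-- with `k̄(m) = ⌈(1+ε)·m·log 2/log β⌉`, for Lebesgue-a.e. `x ∈ [0,1]`
there exists `M ∈ ℕ` such that for all `m ≥ M` one has `I_{k̄(m)}(u,x) ⊆ D_m(x)`;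
in particular `k(m,u,x) ≤ k̄(m)` for all `m ≥ M`. -/
theorem stmt_7 (β : ℝ) (hβ : β ∈ Set.Ioo (1:ℝ) 2) (u : ℕ → ℝ)
    (hu : ∀ n, 1 ≤ n → u n ∈ Set.Icc (1:ℝ) (β - 1)⁻¹)
    (ε : ℝ) (hε : ε ∈ Set.Ioo (0:ℝ) 1) :
    ∀ᵐ x ∂(volume.restrict (Set.Icc (0:ℝ) 1)),
      ∃ M : ℕ, ∀ m ≥ M,
        betaI β u x ⌈(1 + ε) * (m : ℝ) * Real.log 2 / Real.log β⌉₊ ⊆ dyadic m x ∧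
        kval β u x m ≤ (⌈(1 + ε) * (m : ℝ) * Real.log 2 / Real.log β⌉₊ : ℕ∞) := by
  obtain ⟨hβ1, hβ2⟩ := hβ
  have hc : 1 ≤ (β - 1)⁻¹ := (one_le_inv₀ (by linarith)).2 (by linarith)
  have ha : 1 < (2 : ℝ) ^ ε := Real.one_lt_rpow one_lt_two hε.1
  set r : ℕ → ℝ := fun m ↦ (β - 1)⁻¹ / (2 * 2 ^ ε) ^ m
  have hr : ∀ m, 0 ≤ r m := fun m ↦ by positivity
  filter_upwards [ae_restrict_of_ae (ae_eventually_notMem_nearDyadicGrid hr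
    (summable_two_pow_mul_div_two_mul_pow ha _)),
    ae_restrict_mem measurableSet_Icc] with x hx hxI
  obtain ⟨M, hM⟩ := eventually_atTop.1 hx
  refine ⟨max M 1, fun m hm ↦ ?_⟩
  set K := ⌈(1 + ε) * (m : ℝ) * Real.log 2 / Real.log β⌉₊
  have hK : (β - 1)⁻¹ / β ^ K ≤ r m :=
    div_le_div_of_nonneg_left (by positivity) (by positivity)
      (two_mul_rpow_pow_le_pow_ceil hβ1 ε m)
  have hsub : betaI β u x K ⊆ dyadic m x :=
    (betaI_subset_Icc hβ1 hu ⟨hxI.1, hxI.2.trans hc⟩ K).trans <|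
      (Icc_subset_Icc (by linarith) (by linarith)).trans <|
        Icc_subset_dyadic hxI (hr m) (hM m (le_of_max_le_left hm))
  have hK1 : 1 ≤ K := Nat.one_le_ceil_iff.2 <| by
    have : (1 : ℝ) ≤ m := by exact_mod_cast le_of_max_le_right hm
    have := hε.1
    have := Real.log_pos one_lt_two
    have := Real.log_pos hβ1
    positivity
  exact ⟨hsub, kval_le hK1 hsub⟩
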